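/- Let G be an r-regular graph (r ≥ 2) with n vertices and m = nr/2 edges, and let H be a regular graph on the same n vertices whose adjacency matrix commutes with that of G. Let x_1 = n^{-1/2}·𝟙, x_2, …, x_n be an orthonormal basis of ℝⁿ of common eigenvectors of L(G) and L(H), with eigenvalues μ_i(G) and μ_i(H) respectively (μ_1(G) = μ_1(H) = 0). Then the characteristic polynomial of the Laplacian of [S(G)]_{co-𝓛(G)}^{H}, namely of the block matrix [[L(H) + r·I_n, −B(G)],[−B(G)ᵀ, (m−2r+2)·I_m − J_m + B(G)ᵀB(G)]], equals x·(x − (r+2))·(x − (m−2r+2))^{m−n} · ∏_{i=2}^{n} ( x² − (t_i + r + μ_i(H))x + t_i(r + μ_i(H)) + μ_i(G) − 2r ), where t_i = m − μ_i(G) + 2. -/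

import Mathlib

open Matrix SimpleGraph

/-- The `n × m` vertex–edge incidence matrix of a graph, relative to an
enumeration `e` of its edges. -/
noncomputable def incMat {V : Type} [Fintype V] [DecidableEq V] {m : ℕ}
    (G : SimpleGraph V) [Fintype G.edgeSet] (e : Fin m ≃ G.edgeFinset) :
    Matrix V (Fin m) ℝ :=
  Matrix.of fun i j => if i ∈ (e j : Sym2 V) then (1 : ℝ) else 0

/-!
Every column of the incidence matrix `B` sums to `2`, so `J_m = Bᵀ (J_n / 4) B` and the lower
right block is `c I + Bᵀ K B` with `c = m - 2r + 2` and `K = I - J_n / 4`. Multiplying `x I - L`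
on the right by `[[A, 0], [-Bᵀ, I]]` with `A = (x - c) I - K B Bᵀ` makes it block upper
triangular, and Sylvester's identity `det ((x - c) I_m - Bᵀ K B) = (x - c) ^ (m - n) det A` lets us
cancel `det A` wherever it is nonzero, hence everywhere by continuity in `x`. What remains is an
`n × n` determinant built from `L(H)`, `J_n` and `B Bᵀ = 2 r I - L(G)`, which all act diagonally
on the orthonormal basis `x_i`, so it is the product of the scalar quadratics obtained on each
`x_i`.
-/

namespace Matrix

variable {R : Type*} [CommRing R] {n m : Type*} [DecidableEq n] [DecidableEq m]

theorem smul_one_sub_fromBlocks (A : Matrix n n R) (B : Matrix n m R) (C : Matrix m n R)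
    (D : Matrix m m R) (c x : R) :
    x • 1 - fromBlocks A (-B) (-C) (c • 1 + D) = fromBlocks (x • 1 - A) B C ((x - c) • 1 - D) := by
  rw [← fromBlocks_one, fromBlocks_smul, sub_eq_add_neg, fromBlocks_neg, fromBlocks_add,
    sub_smul]
  simp only [smul_zero, zero_add, neg_neg]
  congr 1 <;> abel

variable [Fintype n] [Fintype m]

theorem det_fromBlocks_mul_det_smul_one_sub (P K : Matrix n n R) (B : Matrix n m R)
    (C : Matrix m n R) (α : R) :
    (fromBlocks P B C (α • 1 - C * K * B)).det * (α • 1 - K * (B * C)).det =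
      (P * (α • 1 - K * (B * C)) - B * C).det * (α • 1 - C * K * B).det := by
  have h : fromBlocks P B C (α • 1 - C * K * B) * fromBlocks (α • 1 - K * (B * C)) 0 (-C) 1 =
      fromBlocks (P * (α • 1 - K * (B * C)) - B * C) B 0 (α • 1 - C * K * B) := by
    simp only [fromBlocks_multiply, Matrix.mul_sub, Matrix.sub_mul, Matrix.mul_smul,
      Matrix.smul_mul, Matrix.mul_neg, Matrix.mul_one, Matrix.one_mul, Matrix.mul_zero,
      Matrix.mul_assoc]
    congr 1 <;> abel
  simpa [det_mul, det_fromBlocks_zero₂₁, det_fromBlocks_zero₁₂] using congrArg det h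

theorem det_smul_one_sub_mul_comm_of_le (B : Matrix m n R) (C : Matrix n m R)
    (hle : Fintype.card n ≤ Fintype.card m) (α : R) :
    (α • 1 - B * C).det = α ^ (Fintype.card m - Fintype.card n) * (α • 1 - C * B).det := by
  have h := congrArg (Polynomial.eval α) (charpoly_mul_comm_of_le B C hle)
  simpa [eval_charpoly, smul_one_eq_diagonal, scalar_apply] using h

theorem mulVec_smul_one_sub_mul_smul_one_sub_sub_eq_smul {P K Q : Matrix n n R} {w : n → R}
    {p k q : R} (hP : P *ᵥ w = p • w) (hK : K *ᵥ w = k • w) (hQ : Q *ᵥ w = q • w) (x c : R) :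
    ((x • 1 - P) * ((x - c) • 1 - K * Q) - Q) *ᵥ w = ((x - p) * (x - c - k * q) - q) • w := by
  simp only [sub_mulVec, ← mulVec_mulVec, smul_mulVec, one_mulVec, hP, hK, hQ, mulVec_sub,
    mulVec_smul]
  module

theorem det_eq_prod_of_orthonormal_of_mulVec_eq_smul (N : Matrix n n R) (v : n → n → R) (d : n → R)
    (hortho : ∀ i j, v i ⬝ᵥ v j = if i = j then 1 else 0) (heig : ∀ j, N *ᵥ v j = d j • v j) :
    N.det = ∏ j, d j := by
  set W : Matrix n n R := of v
  have hW : W * Wᵀ = 1 := by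
    ext i j
    simpa [W, mul_apply, one_apply, dotProduct] using hortho i j
  have hNW : N * Wᵀ = Wᵀ * diagonal d := by
    ext i j
    simpa [W, mul_apply, mulVec, dotProduct, mul_comm, diagonal_apply] using congrFun (heig j) i
  have hdet : IsUnit Wᵀ.det := isUnit_det_of_left_inverse hW
  have := congrArg det hNW
  rw [det_mul, det_mul, det_diagonal, mul_comm] at this
  exact hdet.mul_left_cancel this

section Topological

variable {𝕜 : Type*} [NontriviallyNormedField 𝕜] [CompleteSpace 𝕜]

theorem dense_setOf_det_smul_one_sub_ne_zero (M : Matrix n n 𝕜) :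
    Dense {x : 𝕜 | (x • 1 - M).det ≠ 0} := by
  have hfin : {x : 𝕜 | (x • 1 - M).det = 0}.Finite := by
    convert M.charpoly.finite_setOfPred_isRoot (charpoly_monic M).ne_zero using 2
    simp [eval_charpoly, smul_one_eq_diagonal, scalar_apply]
  simpa [Set.compl_ofPred] using hfin.countable.dense_compl 𝕜

theorem det_smul_one_sub_fromBlocks (A K : Matrix n n 𝕜) (B : Matrix n m 𝕜)
    (C : Matrix m n 𝕜) (hle : Fintype.card n ≤ Fintype.card m) (c x : 𝕜) :
    (x • 1 - fromBlocks A (-B) (-C) (c • 1 + C * K * B)).det =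
      (x - c) ^ (Fintype.card m - Fintype.card n) *
        ((x • 1 - A) * ((x - c) • 1 - K * (B * C)) - B * C).det := by
  revert x
  rw [← funext_iff]
  refine Continuous.ext_on ((dense_setOf_det_smul_one_sub_ne_zero (K * (B * C))).preimage
    (isOpenMap_sub_right c)) (by fun_prop) (by fun_prop) fun x hx => ?_
  rw [smul_one_sub_fromBlocks]
  refine mul_right_cancel₀ hx ?_
  rw [det_fromBlocks_mul_det_smul_one_sub, Matrix.mul_assoc C,
    det_smul_one_sub_mul_comm_of_le C (K * B) hle, Matrix.mul_assoc K]
  ring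

end Topological

theorem of_one_mulVec_eq_smul_of_orthonormal (v : n → n → ℝ) (i₀ : n)
    (hortho : ∀ i j, v i ⬝ᵥ v j = if i = j then 1 else 0)
    (hv₀ : ∀ k, v i₀ k = 1 / √(Fintype.card n)) (j : n) :
    (of fun _ _ => (1 : ℝ) : Matrix n n ℝ) *ᵥ v j =
      (if j = i₀ then (Fintype.card n : ℝ) else 0) • v j := by
  have hsum : ∑ k, v j k = √(Fintype.card n) * if i₀ = j then 1 else 0 := by
    rw [← hortho i₀ j, dotProduct]
    simp only [hv₀, ← Finset.mul_sum]
    have : √(Fintype.card n) ≠ 0 := by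
      have : 0 < Fintype.card n := Fintype.card_pos_iff.mpr ⟨j⟩
      positivity
    field_simp
  ext i
  by_cases h : j = i₀
  · subst h
    simp [mulVec, dotProduct, hv₀]
  · simp [mulVec, dotProduct, hsum, h, Ne.symm h]

end Matrix

theorem Matrix.transpose_mul_mul_eq_sub_of_sum_apply_eq_two {ι κ : Type*} [Fintype ι]
    [DecidableEq ι] (B : Matrix ι κ ℝ) (hB : ∀ t, ∑ i, B i t = 2) :
    Bᵀ * ((1 : Matrix ι ι ℝ) - (4 : ℝ)⁻¹ • of fun _ _ => 1) * B = Bᵀ * B - of fun _ _ => 1 := by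
  have hJB : (of fun _ _ => 1 : Matrix ι ι ℝ) * B = of fun _ _ => 2 := by
    ext i t
    simp [mul_apply, hB]
  have hBJ : Bᵀ * (of fun _ _ => 2 : Matrix ι κ ℝ) = (4 : ℝ) • of fun _ _ => 1 := by
    ext s t
    simp only [mul_apply, transpose_apply, of_apply, ← Finset.sum_mul, hB, smul_apply,
      smul_eq_mul, mul_one]
    norm_num
  rw [Matrix.mul_sub, Matrix.mul_one, Matrix.sub_mul, Matrix.mul_smul, Matrix.smul_mul,
    Matrix.mul_assoc, hJB, hBJ, smul_smul]
  norm_num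

theorem SimpleGraph.IsRegularOfDegree.degMatrix_eq {V : Type*} [Fintype V] [DecidableEq V]
    {G : SimpleGraph V} [DecidableRel G.Adj] {d : ℕ} (hG : G.IsRegularOfDegree d) :
    G.degMatrix ℝ = (d : ℝ) • 1 := by
  ext i j
  simp [degMatrix, diagonal_apply, one_apply, hG i]

section Incidence

variable {V : Type} [Fintype V] [DecidableEq V] {m : ℕ} (G : SimpleGraph V) [DecidableRel G.Adj]
  [Fintype G.edgeSet] (e : Fin m ≃ G.edgeFinset)

theorem incMat_apply (i : V) (t : Fin m) : incMat G e i t = G.incMatrix ℝ i (e t) := by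
  have ht : (e t : Sym2 V) ∈ G.edgeSet := mem_edgeFinset.mp (e t).2
  simp [incMat, incMatrix_apply', incidenceSet, ht]

theorem sum_incMat_apply (t : Fin m) : ∑ i, incMat G e i t = 2 := by
  simpa [incMat_apply] using G.sum_incMatrix_apply_of_mem_edgeSet (mem_edgeFinset.mp (e t).2)

theorem incMat_mul_transpose :
    incMat G e * (incMat G e)ᵀ = G.degMatrix ℝ + G.adjMatrix ℝ := by
  have h : incMat G e * (incMat G e)ᵀ = G.incMatrix ℝ * (G.incMatrix ℝ)ᵀ := by
    ext i j
    let f : Sym2 V → ℝ := fun s => G.incMatrix ℝ i s * G.incMatrix ℝ j s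
    calc (incMat G e * (incMat G e)ᵀ) i j = ∑ s : G.edgeFinset, f s := by
          simpa [mul_apply, incMat_apply, f] using e.sum_comp (fun s : G.edgeFinset => f s)
      _ = ∑ s, f s := by
          rw [Finset.sum_coe_sort]
          refine Finset.sum_subset (Finset.subset_univ _) fun s _ hs => ?_
          have : s ∉ G.incidenceSet i := fun h => hs (mem_edgeFinset.mpr h.1)
          simp [f, incMatrix_of_notMem_incidenceSet _ this]
  rw [h, incMatrix_mul_transpose]
  ext i j
  by_cases hij : i = j
  · subst hij; simp [degMatrix]
  · simp [degMatrix, hij, adjMatrix_apply]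

theorem incMat_mul_transpose_of_isRegularOfDegree {d : ℕ} (hG : G.IsRegularOfDegree d) :
    incMat G e * (incMat G e)ᵀ = (2 * d : ℝ) • 1 - G.lapMatrix ℝ := by
  rw [incMat_mul_transpose, lapMatrix, hG.degMatrix_eq]
  module

end Incidence

theorem stmt_5_general (n m r : ℕ) (hr : 2 ≤ r) (hn : 0 < n) (hm : n * r = 2 * m)
    (G H : SimpleGraph (Fin n)) [DecidableRel G.Adj] [DecidableRel H.Adj]
    [Fintype G.edgeSet]
    (hG : G.IsRegularOfDegree r)
    (e : Fin m ≃ G.edgeFinset)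
    (v : Fin n → (Fin n → ℝ)) (μG μH : Fin n → ℝ)
    (hortho : ∀ i j, v i ⬝ᵥ v j = if i = j then 1 else 0)
    (hv0 : ∀ k, v ⟨0, hn⟩ k = 1 / Real.sqrt n)
    (heigG : ∀ i, (G.lapMatrix ℝ).mulVec (v i) = μG i • v i)
    (heigH : ∀ i, (H.lapMatrix ℝ).mulVec (v i) = μH i • v i)
    (hμG0 : μG ⟨0, hn⟩ = 0) (hμH0 : μH ⟨0, hn⟩ = 0)
    (x : ℝ) :
    (x • (1 : Matrix (Fin n ⊕ Fin m) (Fin n ⊕ Fin m) ℝ) -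
        Matrix.fromBlocks (H.lapMatrix ℝ + (r : ℝ) • 1)
          (-(incMat G e)) (-(incMat G e)ᵀ)
          (((m : ℝ) - 2 * (r : ℝ) + 2) • (1 : Matrix (Fin m) (Fin m) ℝ) -
            Matrix.of (fun _ _ => (1 : ℝ)) + (incMat G e)ᵀ * incMat G e)).det
      = x * (x - ((r : ℝ) + 2)) * (x - ((m : ℝ) - 2 * (r : ℝ) + 2)) ^ (m - n) *
          ∏ i ∈ Finset.univ.erase (⟨0, hn⟩ : Fin n),
            (x ^ 2 - (((m : ℝ) - μG i + 2) + (r : ℝ) + μH i) * x +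
              ((m : ℝ) - μG i + 2) * ((r : ℝ) + μH i) + μG i - 2 * (r : ℝ)) := by
  set B := incMat G e
  set K : Matrix (Fin n) (Fin n) ℝ := 1 - (4 : ℝ)⁻¹ • of fun _ _ => 1
  have hnm : n ≤ m := by nlinarith
  have hD : ((m : ℝ) - 2 * r + 2) • (1 : Matrix (Fin m) (Fin m) ℝ) - of (fun _ _ => 1) + Bᵀ * B =
      ((m : ℝ) - 2 * r + 2) • 1 + Bᵀ * K * B := by
    rw [transpose_mul_mul_eq_sub_of_sum_apply_eq_two B (sum_incMat_apply G e)]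
    abel
  have hP j : (H.lapMatrix ℝ + (r : ℝ) • 1) *ᵥ v j = (μH j + r) • v j := by
    rw [add_mulVec, heigH, smul_mulVec, one_mulVec, add_smul]
  have hK j : K *ᵥ v j = (1 - 4⁻¹ * if j = ⟨0, hn⟩ then (n : ℝ) else 0) • v j := by
    rw [sub_mulVec, one_mulVec, smul_mulVec,
      of_one_mulVec_eq_smul_of_orthonormal v _ hortho (by simpa using hv0), Fintype.card_fin,
      smul_smul, sub_smul, one_smul]
  have hQ j : (B * Bᵀ) *ᵥ v j = (2 * r - μG j) • v j := by
    rw [incMat_mul_transpose_of_isRegularOfDegree G e hG, sub_mulVec, smul_mulVec, one_mulVec,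
      heigG, sub_smul]
  rw [hD, det_smul_one_sub_fromBlocks _ K _ _ (by simpa using hnm), Fintype.card_fin,
    Fintype.card_fin, det_eq_prod_of_orthonormal_of_mulVec_eq_smul _ v _ hortho fun j =>
      mulVec_smul_one_sub_mul_smul_one_sub_sub_eq_smul (hP j) (hK j) (hQ j) _ _,
    ← Finset.mul_prod_erase _ _ (Finset.mem_univ ⟨0, hn⟩), if_pos rfl, hμG0, hμH0]
  have hrest : ∀ j ∈ Finset.univ.erase (⟨0, hn⟩ : Fin n),
      (x - (μH j + r)) * (x - (m - 2 * r + 2) -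
          (1 - 4⁻¹ * if j = ⟨0, hn⟩ then (n : ℝ) else 0) * (2 * r - μG j)) - (2 * r - μG j) =
        x ^ 2 - ((m - μG j + 2) + r + μH j) * x + (m - μG j + 2) * (r + μH j) + μG j - 2 * r :=
    fun j hj => by rw [if_neg (Finset.ne_of_mem_erase hj)]; ring
  have hnr : (n : ℝ) * r = 2 * m := by exact_mod_cast hm
  have h0 : (x - (0 + r)) * (x - (m - 2 * r + 2) - (1 - 4⁻¹ * n) * (2 * r - 0)) - (2 * r - 0) =
      x * (x - (r + 2)) := by
    linear_combination (x - r) / 2 * hnr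
  rw [h0, Finset.prod_congr rfl hrest]
  ring

/-- `L`-characteristic polynomial of $[S(G)]_{\overline{\mathcal L(G)}}^{H}$. -/
theorem stmt_5 (n m r : ℕ) (hr : 2 ≤ r) (hn : 0 < n) (hm : n * r = 2 * m)
    (G H : SimpleGraph (Fin n)) [DecidableRel G.Adj] [DecidableRel H.Adj]
    [Fintype G.edgeSet]
    (hG : G.IsRegularOfDegree r) (rH : ℕ) (hH : H.IsRegularOfDegree rH)
    (hcomm : G.adjMatrix ℝ * H.adjMatrix ℝ = H.adjMatrix ℝ * G.adjMatrix ℝ)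
    (e : Fin m ≃ G.edgeFinset)
    (v : Fin n → (Fin n → ℝ)) (μG μH : Fin n → ℝ)
    (hortho : ∀ i j, v i ⬝ᵥ v j = if i = j then 1 else 0)
    (hv0 : ∀ k, v ⟨0, hn⟩ k = 1 / Real.sqrt n)
    (heigG : ∀ i, (G.lapMatrix ℝ).mulVec (v i) = μG i • v i)
    (heigH : ∀ i, (H.lapMatrix ℝ).mulVec (v i) = μH i • v i)
    (hμG0 : μG ⟨0, hn⟩ = 0) (hμH0 : μH ⟨0, hn⟩ = 0)
    (x : ℝ) :
    (x • (1 : Matrix (Fin n ⊕ Fin m) (Fin n ⊕ Fin m) ℝ) -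
        Matrix.fromBlocks (H.lapMatrix ℝ + (r : ℝ) • 1)
          (-(incMat G e)) (-(incMat G e)ᵀ)
          (((m : ℝ) - 2 * (r : ℝ) + 2) • (1 : Matrix (Fin m) (Fin m) ℝ) -
            Matrix.of (fun _ _ => (1 : ℝ)) + (incMat G e)ᵀ * incMat G e)).det
      = x * (x - ((r : ℝ) + 2)) * (x - ((m : ℝ) - 2 * (r : ℝ) + 2)) ^ (m - n) *
          ∏ i ∈ Finset.univ.erase (⟨0, hn⟩ : Fin n),
            (x ^ 2 - (((m : ℝ) - μG i + 2) + (r : ℝ) + μH i) * x +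
              ((m : ℝ) - μG i + 2) * ((r : ℝ) + μH i) + μG i - 2 * (r : ℝ)) :=
  stmt_5_general n m r hr hn hm G H hG e v μG μH hortho hv0 heigG heigH hμG0 hμH0 x
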